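/- arXiv:math/0612063 — 4 statements merged into one kernel-verified Lean document; each statement's English description precedes it below -/
import Mathlib

section
/- For all y ≥ 0 and nonnegative integers m, n with n ≥ m: y^{m+1} ∫₁^∞ e^{-2y(ρ-1)} ρ^m P_n(y(ρ-1)) dρ ≤ 2^{-m} (m+n)! ∑_{j=0}^{m} y^j/j!, where P_n(z) = ∑_{j=0}^{n} (n!/j!) z^j. -/
/-!
Since `P_n(z) = n! ∑_{j ≤ n} z^j/j! ≤ n! e^z` for `z ≥ 0`, the substitution `ρ = t + 1` bounds the
integral by `n! ∫₀^∞ (t+1)^m e^{-yt} dt`. Expanding `(t+1)^m` binomially and using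
`∫₀^∞ t^k e^{-yt} dt = k!/y^{k+1}`, this integral times `y^{m+1}` equals `m! ∑_{j ≤ m} y^j/j!`.
Finally `2^m m! n! ≤ (m+n)!` when `m ≤ n`.
-/

open MeasureTheory Real Finset

/-- The polynomial `P_n(z) = ∑_{j=0}^n (n!/j!) z^j`. -/
noncomputable def P (n : ℕ) (z : ℝ) : ℝ :=
  ∑ j ∈ Finset.range (n + 1), ((n.factorial : ℝ) / (j.factorial : ℝ)) * z ^ j

lemma P_eq_factorial_mul_sum (n : ℕ) (z : ℝ) :
    P n z = n.factorial * ∑ j ∈ range (n + 1), z ^ j / j.factorial := by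
  rw [P, mul_sum]
  exact sum_congr rfl fun j _ => by ring

lemma P_nonneg (n : ℕ) {z : ℝ} (hz : 0 ≤ z) : 0 ≤ P n z := by
  rw [P_eq_factorial_mul_sum]
  positivity

lemma P_le_factorial_mul_exp (n : ℕ) {z : ℝ} (hz : 0 ≤ z) : P n z ≤ n.factorial * exp z := by
  rw [P_eq_factorial_mul_sum]
  exact mul_le_mul_of_nonneg_left (sum_le_exp_of_nonneg hz _) (by positivity)

lemma two_pow_mul_factorial_mul_factorial_le {m n : ℕ} (h : m ≤ n) :
    2 ^ m * (m.factorial * n.factorial) ≤ (m + n).factorial := by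
  induction m with
  | zero => simp
  | succ m ih =>
    calc 2 ^ (m + 1) * ((m + 1).factorial * n.factorial)
        = (2 * (m + 1)) * (2 ^ m * (m.factorial * n.factorial)) := by
          rw [Nat.factorial_succ]; ring
      _ ≤ (m + n + 1) * (m + n).factorial := Nat.mul_le_mul (by omega) (ih (by omega))
      _ = (m + 1 + n).factorial := by rw [Nat.add_right_comm m 1 n, Nat.factorial_succ]

lemma setIntegral_Ioi_eq_setIntegral_Ioi_zero_comp_add {E : Type*} [NormedAddCommGroup E]
    [NormedSpace ℝ E] (f : ℝ → E) (a : ℝ) :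
    ∫ x in Set.Ioi a, f x = ∫ t in Set.Ioi 0, f (t + a) := by
  have hpre : (· + a) ⁻¹' Set.Ioi a = Set.Ioi 0 := by ext t; simp
  rw [← (measurePreserving_add_right volume a).setIntegral_preimage_emb
    (Homeomorph.addRight a).measurableEmbedding, hpre]

lemma integrableOn_Ioi_pow_mul_exp_neg_mul (k : ℕ) {y : ℝ} (hy : 0 < y) :
    IntegrableOn (fun t : ℝ => t ^ k * exp (-(y * t))) (Set.Ioi 0) := by
  simpa [rpow_natCast, neg_mul] using integrableOn_rpow_mul_exp_neg_mul_rpow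
    (s := k) (p := 1) (neg_one_lt_zero.trans_le k.cast_nonneg) zero_lt_one hy

lemma integral_Ioi_pow_mul_exp_neg_mul (k : ℕ) {y : ℝ} (hy : 0 < y) :
    ∫ t in Set.Ioi 0, t ^ k * exp (-(y * t)) = k.factorial / y ^ (k + 1) := by
  have h := integral_rpow_mul_exp_neg_mul_Ioi (a := k + 1) (by positivity) hy
  rw [add_sub_cancel_right, Gamma_nat_eq_factorial, ← Nat.cast_succ, rpow_natCast] at h
  simp_rw [rpow_natCast] at h
  rw [h, one_div, inv_pow, div_eq_inv_mul]

lemma add_one_pow_mul_exp_neg_mul_eq_sum (m : ℕ) (y t : ℝ) :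
    (t + 1) ^ m * exp (-(y * t)) = ∑ k ∈ range (m + 1), m.choose k * (t ^ k * exp (-(y * t))) := by
  rw [add_pow, sum_mul]
  exact sum_congr rfl fun k _ => by simp; ring

lemma integrableOn_Ioi_add_one_pow_mul_exp_neg_mul (m : ℕ) {y : ℝ} (hy : 0 < y) :
    IntegrableOn (fun t : ℝ => (t + 1) ^ m * exp (-(y * t))) (Set.Ioi 0) := by
  simp_rw [add_one_pow_mul_exp_neg_mul_eq_sum]
  exact integrable_finsetSum _ fun k _ => (integrableOn_Ioi_pow_mul_exp_neg_mul k hy).const_mul _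

lemma sum_choose_mul_factorial_mul_pow_sub (m : ℕ) (y : ℝ) :
    ∑ k ∈ range (m + 1), (m.choose k : ℝ) * k.factorial * y ^ (m - k) =
      m.factorial * ∑ j ∈ range (m + 1), y ^ j / j.factorial := by
  rw [← sum_range_reflect, mul_sum]
  refine sum_congr rfl fun j hj => ?_
  have hjm : j ≤ m := Nat.lt_succ_iff.mp (mem_range.mp hj)
  have hfact : (m.choose (m - j) : ℝ) * j.factorial * (m - j).factorial = m.factorial := by
    rw [Nat.choose_symm hjm]
    exact_mod_cast Nat.choose_mul_factorial_mul_factorial hjm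
  rw [Nat.add_sub_cancel, Nat.sub_sub_self hjm, ← hfact]
  field_simp

lemma pow_succ_mul_integral_Ioi_add_one_pow_mul_exp_neg_mul (m : ℕ) {y : ℝ} (hy : 0 < y) :
    y ^ (m + 1) * ∫ t in Set.Ioi 0, (t + 1) ^ m * exp (-(y * t)) =
      m.factorial * ∑ j ∈ range (m + 1), y ^ j / j.factorial := by
  simp_rw [add_one_pow_mul_exp_neg_mul_eq_sum]
  rw [integral_finsetSum _ fun k _ => (integrableOn_Ioi_pow_mul_exp_neg_mul k hy).const_mul _,
    ← sum_choose_mul_factorial_mul_pow_sub, mul_sum]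
  refine sum_congr rfl fun k hk => ?_
  have hkm : k ≤ m := Nat.lt_succ_iff.mp (mem_range.mp hk)
  rw [integral_const_mul, integral_Ioi_pow_mul_exp_neg_mul k hy,
    show m + 1 = (m - k) + (k + 1) by omega, pow_add]
  field_simp

lemma integral_Ioi_exp_mul_add_one_pow_mul_P_le (m n : ℕ) {y : ℝ} (hy : 0 < y) :
    ∫ t in Set.Ioi 0, exp (-2 * y * t) * (t + 1) ^ m * P n (y * t) ≤
      n.factorial * ∫ t in Set.Ioi 0, (t + 1) ^ m * exp (-(y * t)) := by
  rw [← integral_const_mul]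
  refine integral_mono_of_nonneg ?_ ((integrableOn_Ioi_add_one_pow_mul_exp_neg_mul m hy).const_mul _) ?_
  all_goals filter_upwards [ae_restrict_mem measurableSet_Ioi] with t ht
  · have := P_nonneg n (mul_nonneg hy.le (le_of_lt ht))
    have : (0 : ℝ) ≤ t + 1 := by linarith [ht.out]
    positivity
  · have hP := P_le_factorial_mul_exp n (mul_nonneg hy.le (le_of_lt ht))
    have hexp : exp (-2 * y * t) * exp (y * t) = exp (-(y * t)) := by rw [← exp_add]; ring_nf
    have : (0 : ℝ) ≤ (t + 1) ^ m := pow_nonneg (by linarith [ht.out]) m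
    calc exp (-2 * y * t) * (t + 1) ^ m * P n (y * t)
        ≤ exp (-2 * y * t) * (t + 1) ^ m * (n.factorial * exp (y * t)) := by gcongr
      _ = n.factorial * ((t + 1) ^ m * exp (-(y * t))) := by rw [← hexp]; ring

theorem stmt_2 (y : ℝ) (hy : 0 ≤ y) (m n : ℕ) (hmn : m ≤ n) :
    y ^ (m + 1) *
        ∫ ρ in Set.Ioi (1:ℝ), Real.exp (-2 * y * (ρ - 1)) * ρ ^ m * P n (y * (ρ - 1)) ≤
      ((m + n).factorial : ℝ) / 2 ^ m *
        ∑ j ∈ Finset.range (m + 1), y ^ j / (j.factorial : ℝ) := by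
  rcases hy.eq_or_lt with rfl | hy
  · rw [zero_pow m.succ_ne_zero, zero_mul]
    positivity
  have hfact : (m.factorial : ℝ) * n.factorial ≤ (m + n).factorial / 2 ^ m := by
    rw [le_div_iff₀ (by positivity), mul_comm]
    exact_mod_cast two_pow_mul_factorial_mul_factorial_le hmn
  rw [setIntegral_Ioi_eq_setIntegral_Ioi_zero_comp_add _ 1]
  simp_rw [add_sub_cancel_right]
  calc y ^ (m + 1) * ∫ t in Set.Ioi 0, exp (-2 * y * t) * (t + 1) ^ m * P n (y * t)
      ≤ y ^ (m + 1) * (n.factorial * ∫ t in Set.Ioi 0, (t + 1) ^ m * exp (-(y * t))) := by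
        gcongr
        exact integral_Ioi_exp_mul_add_one_pow_mul_P_le m n hy
    _ = m.factorial * n.factorial * ∑ j ∈ range (m + 1), y ^ j / j.factorial := by
        rw [mul_left_comm, pow_succ_mul_integral_Ioi_add_one_pow_mul_exp_neg_mul m hy]
        ring
    _ ≤ (m + n).factorial / 2 ^ m * ∑ j ∈ range (m + 1), y ^ j / j.factorial := by
        gcongr
end

section
/- Let μ > 3, β ≥ 0, and define ‖f̂‖_{μ,β} = sup_{k∈ℝ³} (1+|k|)^μ e^{β|k|} |f̂(k)|. If ‖v̂‖_{μ,β} < ∞ and ‖ŵ‖_{μ,β} < ∞ then the Fourier convolution satisfies ‖v̂ ∗ ŵ‖_{μ,β} ≤ C₀ ‖v̂‖_{μ,β} ‖ŵ‖_{μ,β}, where C₀ = 32π·2^μ/((μ-1)(μ-2)(μ-3)). -/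
/-!
Bound `|v̂(k')| ≤ ‖v̂‖ (1+|k'|)^{-μ} e^{-β|k'|}` and likewise for `ŵ(k-k')`. Since `|k| ≤ |k'| + |k-k'|`
the exponentials combine to at most `e^{-β|k|}`, and the larger of `|k'|`, `|k-k'|` is at least
`|k|/2`, so the product of the polynomial weights is at most
`2^μ (1+|k|)^{-μ} ((1+|k'|)^{-μ} + (1+|k-k'|)^{-μ})`. Each of the two terms integrates to
`∫_{ℝ³} (1+|x|)^{-μ} dx = 4π ∫_0^∞ r² (1+r)^{-μ} dr = 8π/((μ-1)(μ-2)(μ-3))`, finite as `μ > 3`.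
-/

open MeasureTheory Real

/-- The weighted sup-norm `‖f‖_{μ,β} = sup_k (1+|k|)^μ e^{β|k|} |f(k)|`. -/
noncomputable def wnorm (μ β : ℝ) (f : EuclideanSpace ℝ (Fin 3) → ℂ) : ℝ :=
  ⨆ k : EuclideanSpace ℝ (Fin 3), (1 + ‖k‖) ^ μ * Real.exp (β * ‖k‖) * ‖f k‖

open Filter Topology

-- `r ^ 2 = (1 + r) ^ 2 - 2 (1 + r) + 1` gives the antiderivative termwise.
theorem integral_Ioi_sq_mul_one_add_rpow_neg {μ : ℝ} (hμ : 3 < μ) :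
    ∫ r in Set.Ioi (0 : ℝ), r ^ 2 * (1 + r) ^ (-μ) = 2 / ((μ - 1) * (μ - 2) * (μ - 3)) := by
  have h1 : 1 - μ ≠ 0 := by linarith
  have h2 : 2 - μ ≠ 0 := by linarith
  have h3 : 3 - μ ≠ 0 := by linarith
  set F : ℝ → ℝ := fun r =>
    (1 + r) ^ (3 - μ) / (3 - μ) - 2 * ((1 + r) ^ (2 - μ) / (2 - μ)) + (1 + r) ^ (1 - μ) / (1 - μ)
  have hF : ∀ r ∈ Set.Ici (0 : ℝ), HasDerivAt F (r ^ 2 * (1 + r) ^ (-μ)) r := by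
    intro r (hr : 0 ≤ r)
    have hr1 : 0 < 1 + r := by linarith
    have hd : ∀ p : ℝ, HasDerivAt (fun x : ℝ => (1 + x) ^ p) (p * (1 + r) ^ (p - 1)) r := by
      intro p
      simpa using ((hasDerivAt_id r).const_add 1).rpow_const (p := p) (Or.inl hr1.ne')
    refine ((((hd _).div_const (3 - μ)).sub (((hd _).div_const (2 - μ)).const_mul 2)).add
      ((hd _).div_const (1 - μ))).congr_deriv ?_
    rw [show (3 : ℝ) - μ - 1 = 2 + -μ by ring, show (2 : ℝ) - μ - 1 = 1 + -μ by ring,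
      show (1 : ℝ) - μ - 1 = -μ by ring, rpow_add hr1, rpow_add hr1, rpow_one, rpow_two]
    field_simp
    ring
  have hF0 : Tendsto F atTop (𝓝 0) := by
    have h0 : ∀ p : ℝ, p < 0 → Tendsto (fun x : ℝ => (1 + x) ^ p) atTop (𝓝 0) := fun p hp => by
      have h := tendsto_rpow_neg_atTop (y := -p) (by linarith)
      rw [neg_neg] at h
      exact h.comp (tendsto_atTop_add_const_left _ 1 tendsto_id)
    simpa using (((h0 _ (by linarith)).div_const _).sub
      (((h0 _ (by linarith)).div_const _).const_mul 2)).add ((h0 _ (by linarith)).div_const _)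
  have hnonneg : ∀ r ∈ Set.Ioi (0 : ℝ), 0 ≤ r ^ 2 * (1 + r) ^ (-μ) := fun r (hr : 0 < r) => by
    have : 0 < 1 + r := by linarith
    positivity
  rw [integral_Ioi_of_hasDerivAt_of_nonneg' hF hnonneg hF0]
  have : μ - 1 ≠ 0 := by linarith
  have : μ - 2 ≠ 0 := by linarith
  have : μ - 3 ≠ 0 := by linarith
  simp only [F, add_zero, one_rpow]
  field_simp
  ring

theorem integral_one_add_norm_rpow_neg_fin_three {μ : ℝ} (hμ : 3 < μ) :
    ∫ x : EuclideanSpace ℝ (Fin 3), (1 + ‖x‖) ^ (-μ) = 8 * π / ((μ - 1) * (μ - 2) * (μ - 3)) := by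
  rw [integral_fun_norm_addHaar volume fun r => (1 + r) ^ (-μ)]
  simp only [finrank_euclideanSpace_fin, measureReal_def, EuclideanSpace.volume_ball_fin_three,
    ENNReal.ofReal_one, one_pow, one_mul, smul_eq_mul, nsmul_eq_mul]
  rw [ENNReal.toReal_ofReal (by positivity), Nat.add_one_sub_one,
    integral_Ioi_sq_mul_one_add_rpow_neg hμ]
  have : μ - 1 ≠ 0 := by linarith
  have : μ - 2 ≠ 0 := by linarith
  have : μ - 3 ≠ 0 := by linarith
  field_simp
  ring

theorem one_add_rpow_neg_le_two_rpow_mul {μ a c : ℝ} (hμ : 0 ≤ μ) (ha : 0 ≤ a) (hc : 0 ≤ c)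
    (h : 1 + c ≤ 2 * (1 + a)) : (1 + a) ^ (-μ) ≤ 2 ^ μ * (1 + c) ^ (-μ) := by
  calc (1 + a) ^ (-μ) = 2 ^ μ * (2 * (1 + a)) ^ (-μ) := by
        rw [mul_rpow zero_le_two (by linarith), ← mul_assoc, ← rpow_add zero_lt_two,
          add_neg_cancel, rpow_zero, one_mul]
    _ ≤ 2 ^ μ * (1 + c) ^ (-μ) := by
        gcongr 2 ^ μ * ?_
        exact rpow_le_rpow_of_nonpos (by linarith) h (by linarith)

theorem one_add_rpow_neg_mul_le {μ a b c : ℝ} (hμ : 0 ≤ μ) (ha : 0 ≤ a) (hb : 0 ≤ b)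
    (hc : 0 ≤ c) (h : c ≤ a + b) :
    (1 + a) ^ (-μ) * (1 + b) ^ (-μ) ≤ 2 ^ μ * (1 + c) ^ (-μ) * ((1 + a) ^ (-μ) + (1 + b) ^ (-μ)) := by
  wlog hab : a ≤ b generalizing a b
  · rw [mul_comm ((1 + a) ^ (-μ)), add_comm ((1 + a) ^ (-μ))]
    exact this hb ha (by linarith) (by linarith)
  have hb' := one_add_rpow_neg_le_two_rpow_mul hμ hb hc (by linarith)
  have ha' : (1 + a) ^ (-μ) ≤ (1 + a) ^ (-μ) + (1 + b) ^ (-μ) :=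
    le_add_of_nonneg_right (rpow_nonneg (by linarith) _)
  calc (1 + a) ^ (-μ) * (1 + b) ^ (-μ)
      ≤ ((1 + a) ^ (-μ) + (1 + b) ^ (-μ)) * (2 ^ μ * (1 + c) ^ (-μ)) :=
        mul_le_mul ha' hb' (rpow_nonneg (by linarith) _) (by positivity)
    _ = _ := mul_comm _ _

theorem norm_le_mul_one_add_rpow_neg_mul_exp_neg {E F : Type*} [SeminormedAddGroup E] [Norm F]
    {μ β A : ℝ} {f : E → F} {k : E} (h : (1 + ‖k‖) ^ μ * exp (β * ‖k‖) * ‖f k‖ ≤ A) :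
    ‖f k‖ ≤ A * ((1 + ‖k‖) ^ (-μ) * exp (-(β * ‖k‖))) := by
  rw [rpow_neg (by positivity), exp_neg, ← mul_inv, ← div_eq_mul_inv, le_div_iff₀ (by positivity)]
  linarith

section Convolution

variable {E : Type*} [NormedAddCommGroup E] {μ β A B : ℝ} {v w : E → ℂ}

theorem norm_mul_sub_le (hμ : 0 ≤ μ) (hβ : 0 ≤ β)
    (hv : ∀ x, ‖v x‖ ≤ A * ((1 + ‖x‖) ^ (-μ) * exp (-(β * ‖x‖))))
    (hw : ∀ x, ‖w x‖ ≤ B * ((1 + ‖x‖) ^ (-μ) * exp (-(β * ‖x‖)))) (k k' : E) :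
    ‖v k' * w (k - k')‖ ≤ A * B * (2 ^ μ * (1 + ‖k‖) ^ (-μ) * exp (-(β * ‖k‖))) *
      ((1 + ‖k'‖) ^ (-μ) + (1 + ‖k - k'‖) ^ (-μ)) := by
  have hA : 0 ≤ A := nonneg_of_mul_nonneg_left ((norm_nonneg _).trans (hv 0)) (by positivity)
  have hB : 0 ≤ B := nonneg_of_mul_nonneg_left ((norm_nonneg _).trans (hw 0)) (by positivity)
  have htri : ‖k‖ ≤ ‖k'‖ + ‖k - k'‖ := norm_le_insert' k k'
  have hexp : exp (-(β * ‖k'‖)) * exp (-(β * ‖k - k'‖)) ≤ exp (-(β * ‖k‖)) := by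
    rw [← exp_add]
    gcongr
    nlinarith
  calc ‖v k' * w (k - k')‖
      ≤ (A * ((1 + ‖k'‖) ^ (-μ) * exp (-(β * ‖k'‖)))) *
          (B * ((1 + ‖k - k'‖) ^ (-μ) * exp (-(β * ‖k - k'‖)))) := by
        rw [norm_mul]
        exact mul_le_mul (hv _) (hw _) (norm_nonneg _) (by positivity)
    _ = A * B * (((1 + ‖k'‖) ^ (-μ) * (1 + ‖k - k'‖) ^ (-μ)) *
          (exp (-(β * ‖k'‖)) * exp (-(β * ‖k - k'‖)))) := by ring
    _ ≤ A * B * ((2 ^ μ * (1 + ‖k‖) ^ (-μ) * ((1 + ‖k'‖) ^ (-μ) + (1 + ‖k - k'‖) ^ (-μ))) *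
          exp (-(β * ‖k‖))) := by
        gcongr A * B * (?_ * ?_)
        exact one_add_rpow_neg_mul_le hμ (norm_nonneg _) (norm_nonneg _) (norm_nonneg _) htri
    _ = _ := by ring

variable [MeasurableSpace E] [MeasurableAdd E] [MeasurableNeg E] {ν : Measure E}
  [ν.IsNegInvariant] [ν.IsAddLeftInvariant]

theorem norm_integral_mul_sub_le (hμ : 0 ≤ μ) (hβ : 0 ≤ β)
    (hv : ∀ x, ‖v x‖ ≤ A * ((1 + ‖x‖) ^ (-μ) * exp (-(β * ‖x‖))))
    (hw : ∀ x, ‖w x‖ ≤ B * ((1 + ‖x‖) ^ (-μ) * exp (-(β * ‖x‖))))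
    (hint : Integrable (fun x => (1 + ‖x‖) ^ (-μ)) ν) (k : E) :
    ‖∫ k', v k' * w (k - k') ∂ν‖ ≤ A * B * (2 ^ μ * (1 + ‖k‖) ^ (-μ) * exp (-(β * ‖k‖))) *
      (2 * ∫ x, (1 + ‖x‖) ^ (-μ) ∂ν) := by
  have hint' : Integrable (fun k' => (1 + ‖k - k'‖) ^ (-μ)) ν := hint.comp_sub_left k
  calc ‖∫ k', v k' * w (k - k') ∂ν‖
      ≤ ∫ k', A * B * (2 ^ μ * (1 + ‖k‖) ^ (-μ) * exp (-(β * ‖k‖))) *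
          ((1 + ‖k'‖) ^ (-μ) + (1 + ‖k - k'‖) ^ (-μ)) ∂ν :=
        norm_integral_le_of_norm_le ((hint.add hint').const_mul _)
          (.of_forall (norm_mul_sub_le hμ hβ hv hw k))
    _ = _ := by
        rw [integral_const_mul, integral_add hint hint',
          integral_sub_left_eq_self (fun x => (1 + ‖x‖) ^ (-μ)) ν k, two_mul]

end Convolution

theorem wnorm_nonneg (μ β : ℝ) (f : EuclideanSpace ℝ (Fin 3) → ℂ) : 0 ≤ wnorm μ β f :=
  iSup_nonneg fun _ => by positivity

theorem stmt_7_general (μ β : ℝ) (hμ : 3 < μ) (hβ : 0 ≤ β)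
    (v w : EuclideanSpace ℝ (Fin 3) → ℂ)
    (hv : BddAbove (Set.range fun k : EuclideanSpace ℝ (Fin 3) =>
      (1 + ‖k‖) ^ μ * Real.exp (β * ‖k‖) * ‖v k‖))
    (hw : BddAbove (Set.range fun k : EuclideanSpace ℝ (Fin 3) =>
      (1 + ‖k‖) ^ μ * Real.exp (β * ‖k‖) * ‖w k‖)) :
    wnorm μ β (fun k => ∫ k' : EuclideanSpace ℝ (Fin 3), v k' * w (k - k')) ≤
      (32 * Real.pi * (2:ℝ) ^ μ / ((μ - 1) * (μ - 2) * (μ - 3))) *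
        wnorm μ β v * wnorm μ β w := by
  have hv' k := norm_le_mul_one_add_rpow_neg_mul_exp_neg (le_ciSup hv k)
  have hw' k := norm_le_mul_one_add_rpow_neg_mul_exp_neg (le_ciSup hw k)
  have hint : Integrable (fun x : EuclideanSpace ℝ (Fin 3) => (1 + ‖x‖) ^ (-μ)) :=
    integrable_one_add_norm (by simpa using hμ)
  refine ciSup_le fun k => ?_
  have hk : 0 < 1 + ‖k‖ := by positivity
  calc (1 + ‖k‖) ^ μ * exp (β * ‖k‖) * ‖∫ k', v k' * w (k - k')‖
      ≤ (1 + ‖k‖) ^ μ * exp (β * ‖k‖) * (wnorm μ β v * wnorm μ β w *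
          (2 ^ μ * (1 + ‖k‖) ^ (-μ) * exp (-(β * ‖k‖))) *
          (2 * (8 * π / ((μ - 1) * (μ - 2) * (μ - 3))))) := by
        rw [← integral_one_add_norm_rpow_neg_fin_three hμ]
        gcongr
        exact norm_integral_mul_sub_le (by linarith) hβ hv' hw' hint k
    _ = 16 * π * 2 ^ μ / ((μ - 1) * (μ - 2) * (μ - 3)) * wnorm μ β v * wnorm μ β w := by
        rw [rpow_neg hk.le, exp_neg]
        field_simp
        ring
    _ ≤ 32 * π * 2 ^ μ / ((μ - 1) * (μ - 2) * (μ - 3)) * wnorm μ β v * wnorm μ β w := by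
        have : 0 < μ - 3 := by linarith
        have : 0 < μ - 2 := by linarith
        have : 0 < μ - 1 := by linarith
        have := wnorm_nonneg μ β v
        have := wnorm_nonneg μ β w
        gcongr
        norm_num

theorem stmt_7 (μ β : ℝ) (hμ : 3 < μ) (hβ : 0 ≤ β)
    (v w : EuclideanSpace ℝ (Fin 3) → ℂ) (hvm : Measurable v) (hwm : Measurable w)
    (hv : BddAbove (Set.range fun k : EuclideanSpace ℝ (Fin 3) =>
      (1 + ‖k‖) ^ μ * Real.exp (β * ‖k‖) * ‖v k‖))
    (hw : BddAbove (Set.range fun k : EuclideanSpace ℝ (Fin 3) =>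
      (1 + ‖k‖) ^ μ * Real.exp (β * ‖k‖) * ‖w k‖)) :
    wnorm μ β (fun k => ∫ k' : EuclideanSpace ℝ (Fin 3), v k' * w (k - k')) ≤
      (32 * Real.pi * (2:ℝ) ^ μ / ((μ - 1) * (μ - 2) * (μ - 3))) *
        wnorm μ β v * wnorm μ β w :=
  stmt_7_general μ β hμ hβ v w hv hw
end

section
/- There is a constant C* = 1.07555… ≤ 1.1 such that for every integer l ≥ 3: ∑_{l₁=1}^{l-2} 1/((2l₁+1)²(2(l-1-l₁)+1)²) ≤ C*/(2l+3)². -/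
/-!
With `a = 2k + 1`, `b = 2(l - 1 - k) + 1` and `a + b = 2l`, squaring `1/a + 1/b = 2l/(ab)` gives
the partial fraction decomposition
`1/(a²b²) = (1/a² + 1/b²)/(2l)² + 2(1/a + 1/b)/(2l)³`.
The substitution `k ↦ l - 1 - k` maps the range of summation onto itself, so the sum becomes
`A/(2l²) + B/(2l³)` with `A = ∑ 1/(2k+1)²` and `B = ∑ 1/(2k+1)`. Since
`1/(2k+1)² ≤ 1/(4k) - 1/(4(k+1))`, telescoping bounds `A` by `1/4 - 1/(4(l-1))`; the terms of `B`
beyond `1/3 + 1/5 = 8/15` are at most `1/7` each; the resulting rational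
function of `l` is below `1.1/(2l+3)²` for `l ≥ 5`. The cases `l = 3, 4` are computed directly.
-/

open Finset

theorem one_div_sq_mul_sq_eq {K : Type*} [Field K] {a b s : K} (ha : a ≠ 0) (hb : b ≠ 0)
    (hs : s ≠ 0) (hab : a + b = s) :
    1 / (a ^ 2 * b ^ 2) = (1 / a ^ 2 + 1 / b ^ 2) / s ^ 2 + 2 * (1 / a + 1 / b) / s ^ 3 := by
  subst hab
  field_simp
  ring

theorem sum_Icc_one_comp_reflect {M : Type*} [AddCommMonoid M] (n : ℕ) (f : ℝ → M) :
    ∑ k ∈ Icc 1 n, f ((n : ℝ) + 1 - k) = ∑ k ∈ Icc 1 n, f k := by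
  refine sum_nbij' (fun k ↦ n + 1 - k) (fun k ↦ n + 1 - k) ?_ ?_ ?_ ?_ ?_ <;>
    intro k hk <;> simp only [mem_Icc] at hk ⊢
  any_goals omega
  rw [Nat.cast_sub (by omega)]
  push_cast
  ring_nf

theorem sum_Icc_one_div_odd_sq_le (n : ℕ) :
    ∑ k ∈ Icc 1 n, (1 : ℝ) / (2 * k + 1) ^ 2 ≤ 1 / 4 - 1 / (4 * ((n : ℝ) + 1)) := by
  induction n with
  | zero => simp
  | succ n ih =>
    rw [sum_Icc_succ_top (by omega)]
    have hstep : (1 : ℝ) / (2 * (n + 1 : ℕ) + 1) ^ 2 ≤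
        1 / (4 * ((n : ℝ) + 1)) - 1 / (4 * ((n : ℝ) + 1 + 1)) := by
      rw [div_sub_div _ _ (by positivity) (by positivity),
        div_le_div_iff₀ (by positivity) (by positivity)]
      push_cast
      nlinarith
    push_cast at hstep ⊢
    linarith

theorem sum_Icc_one_div_odd_le {n : ℕ} (hn : 2 ≤ n) :
    ∑ k ∈ Icc 1 n, (1 : ℝ) / (2 * k + 1) ≤ 8 / 15 + (n - 2) / 7 := by
  induction n, hn using Nat.le_induction with
  | base => norm_num [show Icc 1 2 = {1, 2} by decide]
  | succ n hn ih =>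
    rw [sum_Icc_succ_top (by omega)]
    have hstep : (1 : ℝ) / (2 * (n + 1 : ℕ) + 1) ≤ 1 / 7 := by
      rw [div_le_div_iff₀ (by positivity) (by norm_num)]
      push_cast
      linarith [(show (2 : ℝ) ≤ n by exact_mod_cast hn)]
    push_cast at hstep ⊢
    linarith

theorem sum_Icc_one_div_odd_sq_mul_odd_sq_eq (n : ℕ) :
    ∑ k ∈ Icc 1 n, (1 : ℝ) / ((2 * k + 1) ^ 2 * (2 * ((n : ℝ) + 1 - k) + 1) ^ 2) =
      (∑ k ∈ Icc 1 n, (1 : ℝ) / (2 * k + 1) ^ 2) / (2 * ((n : ℝ) + 2) ^ 2) +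
        (∑ k ∈ Icc 1 n, (1 : ℝ) / (2 * k + 1)) / (2 * ((n : ℝ) + 2) ^ 3) := by
  have hsplit : ∀ k ∈ Icc 1 n,
      (1 : ℝ) / ((2 * k + 1) ^ 2 * (2 * ((n : ℝ) + 1 - k) + 1) ^ 2) =
        (1 / (2 * k + 1) ^ 2 + 1 / (2 * ((n : ℝ) + 1 - k) + 1) ^ 2) / (2 * ((n : ℝ) + 2)) ^ 2 +
          2 * (1 / (2 * k + 1) + 1 / (2 * ((n : ℝ) + 1 - k) + 1)) / (2 * ((n : ℝ) + 2)) ^ 3 := by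
    intro k hk
    have hkn : (k : ℝ) ≤ n := by exact_mod_cast (mem_Icc.mp hk).2
    exact one_div_sq_mul_sq_eq (by positivity) (by linarith) (by positivity) (by ring)
  rw [sum_congr rfl hsplit, sum_add_distrib, ← sum_div, ← sum_div, ← mul_sum,
    sum_add_distrib, sum_add_distrib,
    sum_Icc_one_comp_reflect n (fun t ↦ (1 : ℝ) / (2 * t + 1) ^ 2),
    sum_Icc_one_comp_reflect n (fun t ↦ (1 : ℝ) / (2 * t + 1))]
  field_simp
  ring

theorem rational_bound_le_of_five_le {x : ℝ} (hx : 5 ≤ x) :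
    (1 / 4 - 1 / (4 * (x - 1))) / (2 * x ^ 2) + (8 / 15 + (x - 4) / 7) / (2 * x ^ 3) ≤
      1.1 / (2 * x + 3) ^ 2 := by
  obtain ⟨t, ht, rfl⟩ : ∃ t : ℝ, 0 ≤ t ∧ x = t + 5 := ⟨x - 5, by linarith, by ring⟩
  rw [← sub_nonneg]
  have hgap : 1.1 / (2 * (t + 5) + 3) ^ 2 - ((1 / 4 - 1 / (4 * (t + 5 - 1))) / (2 * (t + 5) ^ 2) +
      (8 / 15 + (t + 5 - 4) / 7) / (2 * (t + 5) ^ 3)) =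
        (3841 + 21212 * t + 15083 * t ^ 2 + 3520 * t ^ 3 + 264 * t ^ 4) /
          (840 * (t + 5) ^ 3 * (t + 4) * (2 * t + 13) ^ 2) := by
    have : t + 5 - 1 ≠ 0 := by linarith
    have : t + 5 ≠ 0 := by linarith
    have : 2 * (t + 5) + 3 ≠ 0 := by linarith
    rw [show (1.1 : ℝ) = 11 / 10 by norm_num]
    field_simp
    ring
  rw [hgap]
  positivity

theorem stmt_15 :
    ∃ C : ℝ, 0 < C ∧ C ≤ 1.1 ∧
      ∀ l : ℕ, 3 ≤ l →
        (∑ l₁ ∈ Finset.Icc 1 (l - 2),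
            (1:ℝ) / ((2 * (l₁:ℝ) + 1) ^ 2 * (2 * ((l:ℝ) - 1 - (l₁:ℝ)) + 1) ^ 2)) ≤
          C / (2 * (l:ℝ) + 3) ^ 2 := by
  refine ⟨1.1, by norm_num, le_rfl, fun l hl ↦ ?_⟩
  obtain rfl | rfl | hl5 : l = 3 ∨ l = 4 ∨ 5 ≤ l := by omega
  · norm_num [show Icc 1 1 = {1} from rfl]
  · norm_num [show Icc 1 2 = {1, 2} from rfl]
  obtain ⟨n, rfl⟩ : ∃ n, l = n + 2 := ⟨l - 2, by omega⟩
  have hreindex : ∀ k : ℕ, ((n + 2 : ℕ) : ℝ) - 1 - k = n + 1 - k := fun k ↦ by push_cast; ring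
  simp only [Nat.add_sub_cancel, hreindex, sum_Icc_one_div_odd_sq_mul_odd_sq_eq]
  have hx : (5 : ℝ) ≤ n + 2 := by exact_mod_cast hl5
  calc _ ≤ (1 / 4 - 1 / (4 * ((n + 2 : ℝ) - 1))) / (2 * (n + 2 : ℝ) ^ 2) +
        (8 / 15 + ((n + 2 : ℝ) - 4) / 7) / (2 * (n + 2 : ℝ) ^ 3) := by
        gcongr
        · exact (sum_Icc_one_div_odd_sq_le n).trans_eq (by ring)
        · exact (sum_Icc_one_div_odd_le (by omega)).trans_eq (by ring)
    _ ≤ _ := by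
        push_cast
        exact rational_bound_le_of_five_le hx
end

section
/- For every real y ≥ 0 and integers l ≥ 0, with Q_N(y) = ∑_{j=0}^{N} 2^{N-j} y^j/j!: if βk satisfies |βk| ≤ l+1 then (|βk|/(l+1))^{2/3} Q_{2l+1}(β|k|) ≤ (1/2) Q_{2l+2}(β|k|), while if |βk| ≥ l+1 then (|βk|/(l+1))^{2/3} Q_{2l+1}(β|k|) ≤ 2 Q_{2l+2}(β|k|). -/
open Real Finset

/-! The recursion `Q_{N+1}(y) = 2 Q_N(y) + y^{N+1}/(N+1)!` gives `2 Q_N ≤ Q_{N+1}`, and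
comparing coefficients gives `y Q_N(y) ≤ (N+1) Q_{N+1}(y)`. With `t = y/(l+1)`: for `t ≤ 1` we bound
`t^{2/3} ≤ 1` and use the first inequality; for `t ≥ 1` we bound `t^{2/3} ≤ t` and use the second
with `N = 2l+1`, where `N + 1 = 2(l+1)`. -/

/-- The polynomial `Q_N(y) = ∑_{j=0}^N 2^{N-j} y^j / j!`. -/
noncomputable def Q (N : ℕ) (y : ℝ) : ℝ :=
  ∑ j ∈ Finset.range (N + 1), 2 ^ (N - j) * y ^ j / (j.factorial : ℝ)

lemma Q_nonneg (N : ℕ) {y : ℝ} (hy : 0 ≤ y) : 0 ≤ Q N y :=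
  sum_nonneg fun _ _ => by positivity

lemma Q_succ (N : ℕ) (y : ℝ) :
    Q (N + 1) y = 2 * Q N y + y ^ (N + 1) / ((N + 1).factorial : ℝ) := by
  rw [Q, sum_range_succ, Q, mul_sum, Nat.sub_self, pow_zero, one_mul]
  congr 1
  refine sum_congr rfl fun j hj => ?_
  rw [Nat.sub_add_comm (Nat.lt_succ_iff.mp (mem_range.mp hj)), pow_succ]
  ring

lemma two_mul_Q_le_Q_succ (N : ℕ) {y : ℝ} (hy : 0 ≤ y) : 2 * Q N y ≤ Q (N + 1) y := by
  rw [Q_succ]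
  exact le_add_of_nonneg_right (by positivity)

lemma mul_Q_le_Q_succ (N : ℕ) {y : ℝ} (hy : 0 ≤ y) :
    y * Q N y ≤ (N + 1) * Q (N + 1) y := by
  have hshift : Q (N + 1) y = ∑ j ∈ range (N + 1),
      2 ^ (N - j) * y ^ (j + 1) / ((j + 1).factorial : ℝ) + 2 ^ (N + 1) := by
    rw [Q, sum_range_succ']
    simp
  rw [hshift, Q, mul_sum, mul_add, mul_sum]
  refine le_add_of_le_of_nonneg (sum_le_sum fun j hj => ?_) (by positivity)
  have hj : (j : ℝ) + 1 ≤ N + 1 := by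
    exact_mod_cast Nat.succ_le_succ (Nat.lt_succ_iff.mp (mem_range.mp hj))
  have hterm : 0 ≤ 2 ^ (N - j) * y ^ (j + 1) / ((j + 1).factorial : ℝ) := by positivity
  calc y * (2 ^ (N - j) * y ^ j / (j.factorial : ℝ))
      = ((j : ℝ) + 1) * (2 ^ (N - j) * y ^ (j + 1) / ((j + 1).factorial : ℝ)) := by
        rw [Nat.factorial_succ, Nat.cast_mul, pow_succ]
        field_simp
        push_cast
        ring
    _ ≤ (N + 1) * (2 ^ (N - j) * y ^ (j + 1) / ((j + 1).factorial : ℝ)) :=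
        mul_le_mul_of_nonneg_right hj hterm

lemma rpow_mul_Q_le_of_le {y : ℝ} (hy : 0 ≤ y) {l : ℕ} (h : y ≤ l + 1) :
    (y / (l + 1)) ^ ((2 : ℝ) / 3) * Q (2 * l + 1) y ≤ (1 / 2) * Q (2 * l + 2) y := by
  have hrpow : (y / (l + 1)) ^ ((2 : ℝ) / 3) ≤ 1 :=
    rpow_le_one (by positivity) ((div_le_one (by positivity)).mpr h) (by norm_num)
  have hQ := two_mul_Q_le_Q_succ (2 * l + 1) hy
  calc (y / (l + 1)) ^ ((2 : ℝ) / 3) * Q (2 * l + 1) y ≤ 1 * Q (2 * l + 1) y :=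
        mul_le_mul_of_nonneg_right hrpow (Q_nonneg _ hy)
    _ ≤ (1 / 2) * Q (2 * l + 2) y := by linarith

lemma rpow_mul_Q_le_of_ge {y : ℝ} (hy : 0 ≤ y) {l : ℕ} (h : l + 1 ≤ y) :
    (y / (l + 1)) ^ ((2 : ℝ) / 3) * Q (2 * l + 1) y ≤ 2 * Q (2 * l + 2) y := by
  have hl : (0 : ℝ) < l + 1 := by positivity
  have hrpow : (y / (l + 1)) ^ ((2 : ℝ) / 3) ≤ y / (l + 1) :=
    rpow_le_self_of_one_le ((one_le_div hl).mpr h) (by norm_num)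
  have hQ := mul_Q_le_Q_succ (2 * l + 1) hy
  push_cast at hQ
  calc (y / (l + 1)) ^ ((2 : ℝ) / 3) * Q (2 * l + 1) y ≤ y / (l + 1) * Q (2 * l + 1) y :=
        mul_le_mul_of_nonneg_right hrpow (Q_nonneg _ hy)
    _ ≤ 2 * Q (2 * l + 2) y := by
        rw [div_mul_eq_mul_div, div_le_iff₀ hl]
        linarith

theorem stmt_19 (β : ℝ) (hβ : 0 < β) (k : EuclideanSpace ℝ (Fin 3)) (l : ℕ) :
    (β * ‖k‖ ≤ (l:ℝ) + 1 →
      (β * ‖k‖ / ((l:ℝ) + 1)) ^ ((2:ℝ)/3) * Q (2 * l + 1) (β * ‖k‖) ≤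
        (1/2) * Q (2 * l + 2) (β * ‖k‖)) ∧
    ((l:ℝ) + 1 ≤ β * ‖k‖ →
      (β * ‖k‖ / ((l:ℝ) + 1)) ^ ((2:ℝ)/3) * Q (2 * l + 1) (β * ‖k‖) ≤
        2 * Q (2 * l + 2) (β * ‖k‖)) := by
  have hy : 0 ≤ β * ‖k‖ := by positivity
  exact ⟨rpow_mul_Q_le_of_le hy, rpow_mul_Q_le_of_ge hy⟩
end
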